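/- Fix ε > 0 and b ≥ 2, and set m_n = √(log b)·n − (3/(4√(log b)))·log n. Then the truncated second-order sum E[ Σ_{v ∈ T_n} (√(log b)·n − h_v/√2)²·exp(−4√(log b)·(√(log b)·n − h_v/√2))·1{h_v/√2 ≤ m_n + y} ] tends to 0 as n → ∞, for every fixed y > 0. -/

import Mathlib

open MeasureTheory ProbabilityTheory Real

/-- The branching random walk on the rooted `b`-ary tree: a vertex is a list of labels in
`Fin b` (the root is `[]`), an edge is identified with its lower endpoint (a nonempty list),
and `brw Y v ω` is the sum of the edge variables along the path from the root to `v`. -/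
noncomputable def brw {Ω : Type*} {b : ℕ} (Y : List (Fin b) → Ω → ℝ)
    (v : List (Fin b)) (ω : Ω) : ℝ :=
  ∑ i ∈ Finset.range v.length, Y (v.take (i + 1)) ω

/-! On the event `h_v/√2 ≤ m_n + y` the gap `u = √(log b) n − h_v/√2` is at least
`a_n = (3/(4√(log b))) log n − y → ∞`, and `u ↦ u e^{−√(log b) u}` decreases on
`[1/√(log b), ∞)`, so every summand is at most `(a_n e^{−√(log b) a_n})² e^{−2√(log b) u}`.
Since `h_v ~ N(0, n)`, the sum `∑_v e^{−2√(log b) u_v}` over the `b^n` vertices has expectation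
`b^n e^{−2n log b} e^{n log b} = 1`, which leaves the bound `(a_n e^{−√(log b) a_n})² → 0`. -/

open Filter Topology Finset
open scoped NNReal

lemma ProbabilityTheory.iIndepFun.map_sum_eq_gaussianReal {ι Ω : Type*} [MeasurableSpace Ω]
    {μ : Measure Ω} {X : ι → Ω → ℝ} (hindep : iIndepFun X μ) (hmeas : ∀ i, Measurable (X i))
    {m : ι → ℝ} {v : ι → ℝ≥0} (hX : ∀ i, μ.map (X i) = gaussianReal (m i) (v i))
    (s : Finset ι) :
    μ.map (∑ i ∈ s, X i) = gaussianReal (∑ i ∈ s, m i) (∑ i ∈ s, v i) := by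
  classical
  have := hindep.isProbabilityMeasure
  induction s using Finset.induction_on with
  | empty => simp [Pi.zero_def, Measure.map_const]
  | insert i s hi ih =>
    simp only [sum_insert hi]
    rw [add_comm (X i), add_comm (m i), add_comm (v i)]
    exact gaussianReal_add_gaussianReal_of_indepFun
      (hindep.indepFun_finsetSum_of_notMem hmeas hi) ih (hX i)

section BranchingRandomWalk

variable {Ω : Type*} {b : ℕ}

def pathEdges (v : List (Fin b)) : Finset (List (Fin b)) :=
  (range v.length).image fun i => v.take (i + 1)

lemma take_succ_injOn (v : List (Fin b)) :
    Set.InjOn (fun i => v.take (i + 1)) (range v.length) := by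
  intro i hi j hj h
  have := congrArg List.length h
  simp only [List.length_take, coe_range, Set.mem_Iio] at this hi hj
  omega

lemma card_pathEdges (v : List (Fin b)) : #(pathEdges v) = v.length := by
  rw [pathEdges, card_image_of_injOn (take_succ_injOn v), card_range]

lemma brw_eq_sum_pathEdges (Y : List (Fin b) → Ω → ℝ) (v : List (Fin b)) :
    brw Y v = ∑ e ∈ pathEdges v, Y e := by
  ext ω
  rw [pathEdges, sum_image (take_succ_injOn v), Finset.sum_apply]
  rfl

variable [MeasurableSpace Ω] {μ : Measure Ω} {Y : List (Fin b) → Ω → ℝ}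

lemma map_brw_eq_gaussianReal (hmeas : ∀ e, Measurable (Y e)) (hindep : iIndepFun Y μ)
    (hgauss : ∀ e, μ.map (Y e) = gaussianReal 0 1) (v : List (Fin b)) :
    μ.map (brw Y v) = gaussianReal 0 v.length := by
  rw [brw_eq_sum_pathEdges, hindep.map_sum_eq_gaussianReal hmeas hgauss]
  simp [card_pathEdges]

lemma integral_exp_mul_brw (hmeas : ∀ e, Measurable (Y e)) (hindep : iIndepFun Y μ)
    (hgauss : ∀ e, μ.map (Y e) = gaussianReal 0 1) (t : ℝ) (v : List (Fin b)) :
    ∫ ω, exp (t * brw Y v ω) ∂μ = exp (v.length * t ^ 2 / 2) := by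
  rw [← mgf, mgf_gaussianReal (map_brw_eq_gaussianReal hmeas hindep hgauss v)]
  simp

lemma integral_sum_exp_neg_two_mul_sqrt_log_eq_one (hmeas : ∀ e, Measurable (Y e))
    (hindep : iIndepFun Y μ) (hgauss : ∀ e, μ.map (Y e) = gaussianReal 0 1) (hb : 1 ≤ b)
    (n : ℕ) :
    ∫ ω, ∑ v : List.Vector (Fin b) n,
      exp (-2 * √(log b) * (√(log b) * n - brw Y v.toList ω / √2)) ∂μ = 1 := by
  have hlog : √(log b) ^ 2 = log b := sq_sqrt (log_nonneg (mod_cast hb))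
  have hexp : ∀ h : ℝ, exp (-2 * √(log b) * (√(log b) * n - h / √2))
      = exp (-(2 * n * log b)) * exp (√2 * √(log b) * h) := by
    intro h
    rw [← exp_add]
    congr 1
    field_simp
    linear_combination (-2 * √2 * n) * hlog + (-√(log b) * h) * sq_sqrt zero_le_two
  have hterm : ∀ v : List.Vector (Fin b) n,
      ∫ ω, exp (√2 * √(log b) * brw Y v.toList ω) ∂μ = exp (n * log b) := by
    intro v
    rw [integral_exp_mul_brw hmeas hindep hgauss, v.toList_length, mul_pow,
      sq_sqrt zero_le_two, hlog]
    ring_nf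
  simp_rw [hexp, ← mul_sum]
  rw [integral_const_mul, integral_finsetSum _ fun v _ =>
    Integrable.of_integral_ne_zero (by rw [hterm]; exact (exp_pos _).ne')]
  simp_rw [hterm, sum_const, card_univ, card_vector, Fintype.card_fin, nsmul_eq_mul]
  rw [Nat.cast_pow, ← rpow_natCast, rpow_def_of_pos (by exact_mod_cast hb), ← exp_add,
    ← exp_add, ← exp_zero]
  ring_nf

end BranchingRandomWalk

lemma mul_exp_neg_mul_le_of_le {c a u : ℝ} (hc : 0 < c) (ha : 1 / c ≤ a) (hau : a ≤ u) :
    u * exp (-c * u) ≤ a * exp (-c * a) := by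
  have hac : 1 ≤ a * c := (div_le_iff₀ hc).1 ha
  have ha0 : 0 ≤ a := (one_div_pos.2 hc).le.trans ha
  have hu : u ≤ a * exp (c * (u - a)) := by
    nlinarith [mul_le_mul_of_nonneg_left (add_one_le_exp (c * (u - a))) ha0]
  calc u * exp (-c * u) ≤ a * exp (c * (u - a)) * exp (-c * u) := by gcongr
    _ = a * exp (-c * a) := by rw [mul_assoc, ← exp_add]; ring_nf

lemma sq_mul_exp_mul_indicator_le {α : Type*} {c a u : ℝ} {s : Set α} {x : α} (hc : 0 < c)
    (ha : 1 / c ≤ a) (hs : x ∈ s → a ≤ u) :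
    u ^ 2 * exp (-4 * c * u) * s.indicator (fun _ => (1 : ℝ)) x
      ≤ (a * exp (-c * a)) ^ 2 * exp (-2 * c * u) := by
  by_cases hx : x ∈ s
  · calc u ^ 2 * exp (-4 * c * u) * s.indicator (fun _ => (1 : ℝ)) x
        = (u * exp (-c * u)) ^ 2 * exp (-2 * c * u) := by
          have hexp : exp (-4 * c * u) = exp (-c * u) ^ 2 * exp (-2 * c * u) := by
            rw [← exp_nat_mul, ← exp_add]; ring_nf
          rw [Set.indicator_of_mem hx, mul_one, hexp]
          ring
      _ ≤ (a * exp (-c * a)) ^ 2 * exp (-2 * c * u) := by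
          have hu : 0 ≤ u := (one_div_pos.2 hc).le.trans (ha.trans (hs hx))
          gcongr ?_ ^ 2 * _
          exact mul_exp_neg_mul_le_of_le hc ha (hs hx)
  · rw [Set.indicator_of_notMem hx, mul_zero]
    positivity

theorem truncated_second_order_sum_tendsto_zero_general
    {Ω : Type*} [MeasurableSpace Ω] (μ : Measure Ω)
    (b : ℕ) (hb : 2 ≤ b) (Y : List (Fin b) → Ω → ℝ)
    (hmeas : ∀ e, Measurable (Y e))
    (hindep : iIndepFun Y μ)
    (hgauss : ∀ e, μ.map (Y e) = gaussianReal 0 1)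
    (y : ℝ) :
    Filter.Tendsto (fun n : ℕ =>
        ∫ ω, ∑ v : List.Vector (Fin b) n,
          (Real.sqrt (Real.log b) * n - brw Y v.toList ω / Real.sqrt 2) ^ 2 *
            Real.exp (-4 * Real.sqrt (Real.log b) *
              (Real.sqrt (Real.log b) * n - brw Y v.toList ω / Real.sqrt 2)) *
            Set.indicator {ω' | brw Y v.toList ω' / Real.sqrt 2 ≤
                Real.sqrt (Real.log b) * n
                  - 3 / (4 * Real.sqrt (Real.log b)) * Real.log n + y}
              (fun _ => (1 : ℝ)) ω ∂μ)
      Filter.atTop (nhds 0) := by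
  set c := √(log b)
  have hc : 0 < c := sqrt_pos.2 (log_pos (by exact_mod_cast hb))
  set a : ℕ → ℝ := fun n => 3 / (4 * c) * log n - y
  have ha : Tendsto a atTop atTop := tendsto_atTop_add_const_right _ _
    ((tendsto_log_atTop.comp tendsto_natCast_atTop_atTop).const_mul_atTop (by positivity))
  have hlim : Tendsto (fun n => (a n * exp (-c * a n)) ^ 2) atTop (𝓝 0) := by
    simpa using ((tendsto_rpow_mul_exp_neg_mul_atTop_nhds_zero 1 c hc).comp ha).pow 2
  refine squeeze_zero' (Eventually.of_forall fun n => integral_nonneg fun ω =>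
    sum_nonneg fun v _ => ?_) ?_ hlim
  · exact mul_nonneg (by positivity) (Set.indicator_nonneg (fun _ _ => zero_le_one) ω)
  filter_upwards [ha.eventually_ge_atTop (1 / c)] with n han
  have hW := integral_sum_exp_neg_two_mul_sqrt_log_eq_one hmeas hindep hgauss
    (by omega : 1 ≤ b) n
  calc _ ≤ ∫ ω, (a n * exp (-c * a n)) ^ 2 * ∑ v : List.Vector (Fin b) n,
          exp (-2 * c * (c * n - brw Y v.toList ω / √2)) ∂μ := by
        refine integral_mono_of_nonneg (Eventually.of_forall fun ω => sum_nonneg fun v _ => ?_)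
          ((Integrable.of_integral_ne_zero (by rw [hW]; exact one_ne_zero)).const_mul _)
          (Eventually.of_forall fun ω => ?_)
        · exact mul_nonneg (by positivity) (Set.indicator_nonneg (fun _ _ => zero_le_one) ω)
        · beta_reduce
          rw [mul_sum]
          exact sum_le_sum fun v _ => sq_mul_exp_mul_indicator_le hc han fun hω => by
            linarith [hω.out]
    _ = (a n * exp (-c * a n)) ^ 2 := by rw [integral_const_mul, hW, mul_one]

/-- With `m_n = √(log b) n − (3/(4√(log b))) log n`, the truncated second-order sum
`E[∑_{v ∈ T_n} (√(log b) n − h_v/√2)² e^{−4√(log b)(√(log b) n − h_v/√2)} 1{h_v/√2 ≤ m_n + y}]`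
tends to `0` as `n → ∞`, for every fixed `y > 0`. -/
theorem truncated_second_order_sum_tendsto_zero
    {Ω : Type*} [MeasurableSpace Ω] (μ : Measure Ω) [IsProbabilityMeasure μ]
    (b : ℕ) (hb : 2 ≤ b) (ε : ℝ) (hε : 0 < ε) (Y : List (Fin b) → Ω → ℝ)
    (hmeas : ∀ e, Measurable (Y e))
    (hindep : iIndepFun Y μ)
    (hgauss : ∀ e, μ.map (Y e) = gaussianReal 0 1)
    (y : ℝ) (hy : 0 < y) :
    Filter.Tendsto (fun n : ℕ =>
        ∫ ω, ∑ v : List.Vector (Fin b) n,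
          (Real.sqrt (Real.log b) * n - brw Y v.toList ω / Real.sqrt 2) ^ 2 *
            Real.exp (-4 * Real.sqrt (Real.log b) *
              (Real.sqrt (Real.log b) * n - brw Y v.toList ω / Real.sqrt 2)) *
            Set.indicator {ω' | brw Y v.toList ω' / Real.sqrt 2 ≤
                Real.sqrt (Real.log b) * n
                  - 3 / (4 * Real.sqrt (Real.log b)) * Real.log n + y}
              (fun _ => (1 : ℝ)) ω ∂μ)
      Filter.atTop (nhds 0) :=
  truncated_second_order_sum_tendsto_zero_general μ b hb Y hmeas hindep hgauss y
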